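/- For lattice terms s, t over a coherence graph G, ⟦s⟧ ⊆ ⟦t⟧ if and only if every finite clique in [s] contains some element of [t] as a subset. -/

import Mathlib

/-- A set of vertices is a clique when its elements are pairwise coherent. -/
def IsClique {V : Type*} (coh : V → V → Prop) (x : Set V) : Prop :=
  ∀ a ∈ x, ∀ b ∈ x, coh a b

/-- The coherence space: the set of cliques of the graph. -/
def Coh {V : Type*} (coh : V → V → Prop) : Set (Set V) :=
  {x | IsClique coh x}

/-- Down-closure (w.r.t. superset, within cliques) of a set of cliques. -/
def dcl {V : Type*} (coh : V → V → Prop) (x : Set (Set V)) : Set (Set V) :=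
  {α | IsClique coh α ∧ ∃ β ∈ x, β ⊆ α}

/-- An observation: a down-closed set of cliques. -/
def IsObs {V : Type*} (coh : V → V → Prop) (x : Set (Set V)) : Prop :=
  x ⊆ Coh coh ∧ ∀ α β : Set V, β ∈ x → β ⊆ α → IsClique coh α → α ∈ x

/-- Heyting implication of sets of cliques. -/
def oimpl {V : Type*} (coh : V → V → Prop) (x y : Set (Set V)) : Set (Set V) :=
  {α | IsClique coh α ∧ ∀ β ∈ x, IsClique coh (α ∪ β) → α ∪ β ∈ y}

/-- Lattice terms over atomic observations. -/
inductive Tlat (V : Type*) where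
  | atom : V → Tlat V
  | top : Tlat V
  | bot : Tlat V
  | and : Tlat V → Tlat V → Tlat V
  | or : Tlat V → Tlat V → Tlat V

/-- Observation semantics of lattice terms. -/
def sem {V : Type*} (coh : V → V → Prop) : Tlat V → Set (Set V)
  | .atom a => dcl coh {{a}}
  | .top => Coh coh
  | .bot => ∅
  | .or s t => sem coh s ∪ sem coh t
  | .and s t => sem coh s ∩ sem coh t

/-- The DNF set-interpretation of lattice terms. -/
def brack {V : Type*} : Tlat V → Set (Set V)
  | .atom a => {{a}}
  | .top => {∅}
  | .bot => ∅
  | .or s t => brack s ∪ brack t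
  | .and s t => Set.image2 (· ∪ ·) (brack s) (brack t)

/-! The observation semantics is the down-closure of the DNF, `⟦t⟧ = dcl [t]`, since `dcl`
turns unions into unions and pairwise unions of generators into intersections. Inclusion of
down-closures is then the relation `◁` on the generating cliques, and the finiteness condition
is automatic because every member of `[s]` is finite. -/

theorem IsClique.subset {V : Type*} {coh : V → V → Prop} {x y : Set V}
    (hy : IsClique coh y) (hxy : x ⊆ y) : IsClique coh x :=
  fun a ha b hb => hy a (hxy ha) b (hxy hb)

section dcl

variable {V : Type*} (coh : V → V → Prop)

theorem dcl_singleton_empty : dcl coh {∅} = Coh coh := by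
  ext α
  simp [dcl, Coh]

theorem dcl_empty : dcl coh (∅ : Set (Set V)) = ∅ := by
  ext α
  simp [dcl]

theorem dcl_union (X Y : Set (Set V)) : dcl coh (X ∪ Y) = dcl coh X ∪ dcl coh Y := by
  ext α
  simp only [dcl, Set.mem_ofPred_eq, Set.mem_union, or_and_right, exists_or, and_or_left]

theorem dcl_image2_union (X Y : Set (Set V)) :
    dcl coh (Set.image2 (· ∪ ·) X Y) = dcl coh X ∩ dcl coh Y := by
  ext α
  simp only [dcl, Set.mem_ofPred_eq, Set.mem_inter_iff, Set.exists_mem_image2, Set.union_subset_iff]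
  constructor
  · rintro ⟨hα, x, hx, y, hy, hxα, hyα⟩
    exact ⟨⟨hα, x, hx, hxα⟩, hα, y, hy, hyα⟩
  · rintro ⟨⟨hα, x, hx, hxα⟩, -, y, hy, hyα⟩
    exact ⟨hα, x, hx, y, hy, hxα, hyα⟩

theorem dcl_subset_dcl_iff (X Y : Set (Set V)) :
    dcl coh X ⊆ dcl coh Y ↔ ∀ x ∈ X, IsClique coh x → ∃ y ∈ Y, y ⊆ x := by
  constructor
  · intro h x hx hcl
    exact (h ⟨hcl, x, hx, subset_rfl⟩).2
  · rintro h α ⟨hα, x, hx, hxα⟩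
    obtain ⟨y, hy, hyx⟩ := h x hx (hα.subset hxα)
    exact ⟨hα, y, hy, hyx.trans hxα⟩

end dcl

theorem sem_eq_dcl_brack {V : Type*} (coh : V → V → Prop) (t : Tlat V) :
    sem coh t = dcl coh (brack t) := by
  induction t with
  | atom a => rfl
  | top => exact (dcl_singleton_empty coh).symm
  | bot => exact (dcl_empty coh).symm
  | or s t ihs iht => rw [sem, brack, dcl_union, ihs, iht]
  | and s t ihs iht => rw [sem, brack, dcl_image2_union, ihs, iht]

theorem finite_of_mem_brack {V : Type*} {t : Tlat V} {x : Set V} (hx : x ∈ brack t) :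
    x.Finite := by
  induction t generalizing x with
  | atom a => exact hx ▸ Set.finite_singleton a
  | top => exact hx ▸ Set.finite_empty
  | bot => exact absurd hx (Set.notMem_empty x)
  | or s t ihs iht => exact hx.elim ihs iht
  | and s t ihs iht =>
    obtain ⟨y, hy, z, hz, rfl⟩ := hx
    exact (ihs hy).union (iht hz)

theorem sem_subset_iff_brack_general {V : Type*} (coh : V → V → Prop)
    (s t : Tlat V) :
    sem coh s ⊆ sem coh t ↔
      ∀ x ∈ brack s, x.Finite → IsClique coh x → ∃ y ∈ brack t, y ⊆ x := by
  rw [sem_eq_dcl_brack, sem_eq_dcl_brack, dcl_subset_dcl_iff]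
  exact forall₂_congr fun x hx => (imp_iff_right (finite_of_mem_brack hx)).symm

theorem sem_subset_iff_brack {V : Type*} (coh : V → V → Prop)
    (hsymm : ∀ a b, coh a b → coh b a) (hrefl : ∀ a, coh a a)
    (s t : Tlat V) :
    sem coh s ⊆ sem coh t ↔
      ∀ x ∈ brack s, x.Finite → IsClique coh x → ∃ y ∈ brack t, y ⊆ x :=
  sem_subset_iff_brack_general coh s t
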